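/- arXiv:2505.12769 — 2 statements merged into one kernel-verified Lean document; each statement's English description precedes it below -/
import Mathlib

section
/- Let G be a directed graph in which no edge outside a cycle has its range on a vertex of that cycle (i.e., no cycle has an entry). Then any two distinct cycles in G are vertex-disjoint. -/
/-- A cycle of length `n` in a directed graph with edge set `E`, source map `s`
and range map `r`: a cyclically indexed family of edges `c : ZMod n → E`
(with `n > 0`) such that the source of each edge is the range of the previous one. -/
def IsGraphCycle {V E : Type*} (s r : E → V) (n : ℕ) (c : ZMod n → E) : Prop :=
  0 < n ∧ ∀ i : ZMod n, s (c (i + 1)) = r (c i)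

/-- The vertex set of a cycle (the ranges of its edges, which coincide with the
sources of its edges). -/
def cycleVertices {V E : Type*} (r : E → V) {n : ℕ} (c : ZMod n → E) : Set V :=
  r '' Set.range c

/-- "No cycle has an entry": no edge outside a cycle has its range on a vertex
of that cycle. -/
def NoCycleHasEntry {V E : Type*} (s r : E → V) : Prop :=
  ∀ (n : ℕ) (c : ZMod n → E), IsGraphCycle s r n c →
    ∀ f : E, f ∉ Set.range c → r f ∉ cycleVertices r c

/-! A cycle `c` without entries is closed under taking predecessors: an edge whose range is a
vertex of `c` must be an edge of `c`, and the source of an edge of `c` is again a vertex of `c`.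
So if a second cycle meets `c` in one vertex, walking it backwards keeps us on edges of `c`,
and since it is cyclic every one of its edges is reached; by symmetry both have the same edges. -/

theorem ZMod.forall_of_forall_add_one_imp {m : ℕ} [NeZero m] {P : ZMod m → Prop}
    (hP : ∀ i, P (i + 1) → P i) {j₀ : ZMod m} (h : P j₀) (j : ZMod m) : P j := by
  have hback : ∀ t : ℕ, P (j₀ - t) := by
    intro t
    induction t with
    | zero => simpa using h
    | succ t ih => exact hP _ (by rwa [Nat.cast_succ, sub_add_eq_sub_sub, sub_add_cancel])
  obtain ⟨t, ht⟩ := ZMod.natCast_zmod_surjective (j₀ - j)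
  simpa [ht] using hback t

section

variable {V E : Type*} {s r : E → V} {n : ℕ} {c : ZMod n → E}

theorem IsGraphCycle.source_mem_cycleVertices (hc : IsGraphCycle s r n c) {e : E}
    (he : e ∈ Set.range c) : s e ∈ cycleVertices r c := by
  obtain ⟨k, rfl⟩ := he
  exact ⟨c (k - 1), ⟨k - 1, rfl⟩, by simpa using (hc.2 (k - 1)).symm⟩

theorem NoCycleHasEntry.mem_range_of_range_mem_cycleVertices (hne : NoCycleHasEntry s r)
    (hc : IsGraphCycle s r n c) {f : E} (hf : r f ∈ cycleVertices r c) : f ∈ Set.range c :=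
  by_contra fun hf' => hne n c hc f hf' hf

theorem NoCycleHasEntry.range_subset_of_mem_cycleVertices (hne : NoCycleHasEntry s r)
    (hc : IsGraphCycle s r n c) {m : ℕ} {d : ZMod m → E} (hd : IsGraphCycle s r m d) {v : V}
    (hvc : v ∈ cycleVertices r c) (hvd : v ∈ cycleVertices r d) :
    Set.range d ⊆ Set.range c := by
  have : NeZero m := ⟨hd.1.ne'⟩
  obtain ⟨_, ⟨j₀, rfl⟩, rfl⟩ := hvd
  have hpred : ∀ i, r (d (i + 1)) ∈ cycleVertices r c → r (d i) ∈ cycleVertices r c := by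
    intro i hi
    rw [← hd.2 i]
    exact hc.source_mem_cycleVertices (hne.mem_range_of_range_mem_cycleVertices hc hi)
  rintro _ ⟨j, rfl⟩
  exact hne.mem_range_of_range_mem_cycleVertices hc
    (ZMod.forall_of_forall_add_one_imp (P := fun i => r (d i) ∈ cycleVertices r c) hpred hvc j)

end

/-- If no cycle of a directed graph has an entry, then any two distinct cycles
(i.e. cycles with different edge sets) are vertex-disjoint. -/
theorem cycles_disjoint_of_noEntry {V E : Type*} (s r : E → V)
    (hne : NoCycleHasEntry s r)
    {n m : ℕ} (c₁ : ZMod n → E) (c₂ : ZMod m → E)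
    (h₁ : IsGraphCycle s r n c₁) (h₂ : IsGraphCycle s r m c₂)
    (hdist : Set.range c₁ ≠ Set.range c₂) :
    Disjoint (cycleVertices r c₁) (cycleVertices r c₂) :=
  Set.disjoint_left.mpr fun _ hv₁ hv₂ => hdist <| subset_antisymm
    (hne.range_subset_of_mem_cycleVertices h₂ h₁ hv₂ hv₁)
    (hne.range_subset_of_mem_cycleVertices h₁ h₂ hv₁ hv₂)
end

section
/- Let G be a directed graph containing a cycle μ with an entry (i.e., there is an edge f not in μ with r(f) a vertex of μ). Then C*(G) admits no faithful tracial state. Consequently, via the standard fact that RFD C*-algebras with countably many generators admit faithful traces, C*(G) is not residually finite-dimensional. -/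
open scoped Matrix.Norms.L2Operator

/-- A unital Cuntz–Krieger `G`-family in a unital complex star algebra `A`, for
a finite directed graph `G = (V, E, s, r)`: mutually orthogonal self-adjoint
idempotents `p v` summing to `1`, and elements `se e` satisfying the
Cuntz–Krieger relations. -/
structure CKFamily (V E : Type) [Fintype V] [Fintype E] [DecidableEq V]
    (s r : E → V) (A : Type*) [Ring A] [Algebra ℂ A] [StarRing A] where
  p : V → A
  se : E → A
  proj_idem : ∀ v, p v * p v = p v
  proj_star : ∀ v, star (p v) = p v
  orth : ∀ v w, v ≠ w → p v * p w = 0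
  ck1 : ∀ e, star (se e) * se e = p (s e)
  ck2 : ∀ v, (∃ e, r e = v) →
    p v = ∑ e ∈ Finset.univ.filter (fun e => r e = v), se e * star (se e)
  sum_p : ∑ v, p v = 1

/-- The C*-algebra `A`, equipped with the Cuntz–Krieger family `F`, is the
graph C*-algebra `C*(G)`: it satisfies the universal property that every
Cuntz–Krieger `G`-family in a unital C*-algebra `B` is the image of `F` under a
unique unital *-homomorphism. -/
def IsUniversalCKFamily (V E : Type) [Fintype V] [Fintype E] [DecidableEq V]
    (s r : E → V) (A : Type*) [Ring A] [Algebra ℂ A] [StarRing A]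
    (F : CKFamily V E s r A) : Prop :=
  ∀ (B : Type) [NormedRing B] [StarRing B] [CStarRing B] [NormedAlgebra ℂ B]
    [StarModule ℂ B] [CompleteSpace B] (Q : CKFamily V E s r B),
    ∃! φ : A →⋆ₐ[ℂ] B, (∀ v, φ (F.p v) = Q.p v) ∧ (∀ e, φ (F.se e) = Q.se e)

/-!
Put `w e = τ (s_e s_e*)`. The trace property and `s_e* s_e = p_{s e}` give `τ p_{s e} = w e`,
and the Cuntz–Krieger relation at `r (c i)`, a sum of positive terms, gives
`τ p_{r (c i)} ≥ w (c i)`, with the extra summand `w f` at the vertex where `f` enters the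
cycle. Since `s (c (i + 1)) = r (c i)`, summing over the cycle yields
`∑ w (c i) + w f ≤ ∑ w (c i)`, so `w f = 0` and faithfulness gives `s_f = 0`. Matrix traces are
faithful traces, so `s_f` also dies in every finite-dimensional representation.

This contradicts `s_f ≠ 0` in `C*(G)`, which maps onto a Cuntz–Krieger family of nonzero
partial isometries on `ℓ²(V × ℕ)`: `p_v` is the projection onto `{v} × ℕ`, and a bijection
`E × ℕ ≃ range r × ℕ` over the vertices splits `{v} × ℕ` into one copy of `ℕ` per edge into `v`.
-/

open Function
open scoped ENNReal

section lpReindex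

variable {𝕜 : Type*} [RCLike 𝕜] {α β X : Type*}

local notation "ℓ²(" T ")" => lp (fun _ : T => 𝕜) 2

lemma lp_summable_norm_rpow (ξ : ℓ²(X)) :
    Summable fun x => ‖ξ x‖ ^ (2 : ℝ≥0∞).toReal :=
  (lp.memℓp ξ).summable (by norm_num)

noncomputable def lpRestrict (k : α ↪ X) : ℓ²(X) →L[𝕜] ℓ²(α) :=
  LinearMap.mkContinuous
    { toFun := fun ξ => ⟨fun a => ξ (k a),
        memℓp_gen ((lp_summable_norm_rpow ξ).comp_injective k.injective)⟩
      map_add' := fun _ _ => rfl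
      map_smul' := fun _ _ => rfl }
    1 fun ξ => by
      rw [one_mul]
      refine lp.norm_le_of_tsum_le (by norm_num) (norm_nonneg _) ?_
      rw [lp.norm_rpow_eq_tsum (by norm_num)]
      exact tsum_comp_le_tsum_of_inj (lp_summable_norm_rpow ξ) (fun _ => by positivity)
        k.injective

@[simp] lemma lpRestrict_apply (k : α ↪ X) (ξ : ℓ²(X)) (a : α) :
    lpRestrict k ξ a = ξ (k a) := rfl

lemma extend_zero_apply_of_notMem {M : Type*} [Zero M] (j : α → X) (g : α → M) {x : X}
    (hx : x ∉ Set.range j) : extend j g 0 x = 0 :=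
  extend_apply' _ _ _ fun ⟨a, ha⟩ => hx ⟨a, ha⟩

lemma norm_rpow_extend (j : α ↪ X) (η : α → 𝕜) :
    (fun x => ‖extend j η 0 x‖ ^ (2 : ℝ≥0∞).toReal) =
      extend j (fun a => ‖η a‖ ^ (2 : ℝ≥0∞).toReal) 0 := by
  funext x
  by_cases hx : x ∈ Set.range j
  · obtain ⟨a, rfl⟩ := hx
    simp only [j.injective.extend_apply]
  · simp [extend_zero_apply_of_notMem j _ hx]

lemma memℓp_extend (j : α ↪ X) (η : ℓ²(α)) : Memℓp (extend j η 0) 2 := by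
  refine memℓp_gen ?_
  rw [norm_rpow_extend,
    ← j.injective.summable_iff fun x hx => extend_zero_apply_of_notMem j _ hx]
  simpa [comp_def, j.injective.extend_apply] using lp_summable_norm_rpow η

noncomputable def lpExtend (j : α ↪ X) : ℓ²(α) →L[𝕜] ℓ²(X) :=
  LinearMap.mkContinuous
    { toFun := fun η => ⟨extend j η 0, memℓp_extend j η⟩
      map_add' := fun η η' => Subtype.ext <|
        (Function.ExtendByZero.linearMap 𝕜 j).map_add η η'
      map_smul' := fun c η => Subtype.ext <|
        (Function.ExtendByZero.linearMap 𝕜 j).map_smul c η }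
    1 fun η => by
      rw [one_mul]
      refine lp.norm_le_of_tsum_le (by norm_num) (norm_nonneg _) (le_of_eq ?_)
      rw [lp.norm_rpow_eq_tsum (by norm_num)]
      refine (congrArg tsum (norm_rpow_extend j η)).trans ?_
      rw [← j.injective.tsum_eq fun x hx =>
        by_contra fun h => hx (extend_zero_apply_of_notMem j _ h)]
      simp [j.injective.extend_apply]

lemma lpExtend_apply_self (j : α ↪ X) (η : ℓ²(α)) (a : α) :
    lpExtend j η (j a) = η a :=
  j.injective.extend_apply _ _ _

lemma lpExtend_apply_of_notMem (j : α ↪ X) (η : ℓ²(α)) {x : X} (hx : x ∉ Set.range j) :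
    lpExtend j η x = 0 :=
  extend_zero_apply_of_notMem j η hx

lemma adjoint_lpExtend (j : α ↪ X) :
    ContinuousLinearMap.adjoint (lpExtend (𝕜 := 𝕜) j) = lpRestrict j := by
  refine ((ContinuousLinearMap.eq_adjoint_iff _ _).2 fun ξ η => ?_).symm
  rw [lp.inner_eq_tsum, lp.inner_eq_tsum, ← j.injective.tsum_eq]
  · simp [lpExtend_apply_self]
  · intro x hx
    by_contra h
    exact hx (by simp [lpExtend_apply_of_notMem j η h])

lemma adjoint_lpRestrict (j : α ↪ X) :
    ContinuousLinearMap.adjoint (lpRestrict (𝕜 := 𝕜) j) = lpExtend j := by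
  rw [← adjoint_lpExtend, ContinuousLinearMap.adjoint_adjoint]

lemma lpRestrict_comp_lpExtend_self (j : α ↪ X) :
    (lpRestrict j).comp (lpExtend j) = ContinuousLinearMap.id 𝕜 ℓ²(α) :=
  ContinuousLinearMap.ext fun η => lp.ext <| funext fun a => lpExtend_apply_self j η a

lemma lpRestrict_comp_lpExtend_of_disjoint {j : α ↪ X} {k : β ↪ X}
    (h : Disjoint (Set.range j) (Set.range k)) :
    (lpRestrict k).comp (lpExtend j) = (0 : ℓ²(α) →L[𝕜] ℓ²(β)) :=
  ContinuousLinearMap.ext fun η => lp.ext <| funext fun b =>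
    lpExtend_apply_of_notMem j η (h.notMem_of_mem_right ⟨b, rfl⟩)

-- Sends the basis vector at `k a` to the one at `j a`, and kills those outside `range k`.
noncomputable def lpPartialIsometry (j k : α ↪ X) : ℓ²(X) →L[𝕜] ℓ²(X) :=
  (lpExtend j).comp (lpRestrict k)

lemma lpPartialIsometry_apply_self (j k : α ↪ X) (ξ : ℓ²(X)) (a : α) :
    lpPartialIsometry j k ξ (j a) = ξ (k a) :=
  lpExtend_apply_self j _ a

lemma adjoint_lpPartialIsometry (j k : α ↪ X) :
    ContinuousLinearMap.adjoint (lpPartialIsometry (𝕜 := 𝕜) j k) = lpPartialIsometry k j := by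
  rw [lpPartialIsometry, ContinuousLinearMap.adjoint_comp, adjoint_lpExtend, adjoint_lpRestrict,
    lpPartialIsometry]

lemma lpPartialIsometry_comp (j k l : α ↪ X) :
    (lpPartialIsometry (𝕜 := 𝕜) j k).comp (lpPartialIsometry k l) = lpPartialIsometry j l := by
  simp only [lpPartialIsometry, ContinuousLinearMap.comp_assoc]
  rw [← (lpRestrict k).comp_assoc, lpRestrict_comp_lpExtend_self, ContinuousLinearMap.id_comp]

lemma lpPartialIsometry_comp_of_disjoint {j k : α ↪ X} {k' l : β ↪ X}
    (h : Disjoint (Set.range k') (Set.range k)) :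
    (lpPartialIsometry (𝕜 := 𝕜) j k).comp (lpPartialIsometry k' l) = 0 := by
  simp only [lpPartialIsometry, ContinuousLinearMap.comp_assoc]
  rw [← (lpRestrict k).comp_assoc, lpRestrict_comp_lpExtend_of_disjoint h,
    ContinuousLinearMap.zero_comp, ContinuousLinearMap.comp_zero]

lemma lpPartialIsometry_self_apply (j : α ↪ X) (ξ : ℓ²(X)) (x : X) :
    lpPartialIsometry j j ξ x = (Set.range j).indicator ξ x := by
  by_cases hx : x ∈ Set.range j
  · obtain ⟨a, rfl⟩ := hx
    simp [lpPartialIsometry_apply_self]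
  · simp [lpPartialIsometry, lpExtend_apply_of_notMem j _ hx, hx]

lemma sum_lpPartialIsometry_self_apply {ι : Type*} (S : Finset ι) (j : ι → α ↪ X)
    (hj : (S : Set ι).PairwiseDisjoint fun i => Set.range (j i)) (ξ : ℓ²(X)) (x : X) :
    (∑ i ∈ S, lpPartialIsometry (𝕜 := 𝕜) (j i) (j i)) ξ x =
      (⋃ i ∈ S, Set.range (j i)).indicator ξ x := by
  rw [Finset.indicator_biUnion_apply S _ hj, sum_apply, lp.coeFn_sum, Finset.sum_apply]
  simp only [lpPartialIsometry_self_apply]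

lemma lpPartialIsometry_ne_zero [Nonempty α] (j k : α ↪ X) :
    lpPartialIsometry (𝕜 := 𝕜) j k ≠ 0 := by
  classical
  intro h
  obtain ⟨a⟩ := ‹Nonempty α›
  have := lpPartialIsometry_apply_self (𝕜 := 𝕜) j k (lp.single 2 (k a) 1) a
  simp [h] at this

end lpReindex

section edgeCoding

variable {V E : Type} (r : E → V)

lemma infinite_fiber_rangeFactorization (c : Set.range r) :
    Infinite {p : E × ℕ // Set.rangeFactorization r p.1 = c} := by
  obtain ⟨e, he⟩ := c.2
  exact Infinite.of_injective (fun n => ⟨(e, n), Subtype.ext he⟩)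
    fun m n h => by simpa using h

noncomputable def edgeNatEquiv [Countable E] : E × ℕ ≃ Set.range r × ℕ :=
  haveI : Countable (Set.range r) := (Set.countable_range r).to_subtype
  Equiv.ofFiberEquiv (f := fun p => Set.rangeFactorization r p.1) (g := Prod.fst) fun c =>
    haveI := infinite_fiber_rangeFactorization r c
    haveI : Infinite {q : Set.range r × ℕ // q.1 = c} :=
      Infinite.of_injective (fun n => ⟨(c, n), rfl⟩) fun m n h => by simpa using h
    nonempty_equiv_of_countable.some

noncomputable def edgeNatEmbedding [Countable E] : E × ℕ ↪ V × ℕ :=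
  (edgeNatEquiv r).toEmbedding.trans ((Embedding.subtype _).prodMap (Embedding.refl ℕ))

lemma edgeNatEmbedding_fst [Countable E] (p : E × ℕ) : (edgeNatEmbedding r p).1 = r p.1 :=
  congrArg Subtype.val (Equiv.ofFiberEquiv_map (g := Prod.fst) _ p)

lemma mem_range_edgeNatEmbedding [Countable E] {x : V × ℕ} (hx : x.1 ∈ Set.range r) :
    x ∈ Set.range (edgeNatEmbedding r) :=
  ⟨(edgeNatEquiv r).symm (⟨x.1, hx⟩, x.2), by simp [edgeNatEmbedding]⟩

end edgeCoding

section lpCKFamily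

open ContinuousLinearMap

variable {V E : Type}

lemma range_sectR (v : V) : Set.range (Embedding.sectR v ℕ) = Prod.fst ⁻¹' {v} := by
  ext ⟨w, n⟩
  simp [eq_comm]

lemma pairwiseDisjoint_range_sectR (S : Set V) :
    S.PairwiseDisjoint fun v => Set.range (Embedding.sectR v ℕ) := fun v _ w _ h => by
  simp only [onFun, range_sectR]
  exact (Set.disjoint_singleton.2 h).preimage _

noncomputable def edgeEmbedding [Countable E] (r : E → V) (e : E) : ℕ ↪ V × ℕ :=
  (Embedding.sectR e ℕ).trans (edgeNatEmbedding r)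

lemma pairwiseDisjoint_range_edgeEmbedding [Countable E] (r : E → V) (S : Set E) :
    S.PairwiseDisjoint fun e => Set.range (edgeEmbedding r e) := by
  rintro e - e' - hne
  refine Set.disjoint_left.2 ?_
  rintro _ ⟨m, rfl⟩ ⟨n, h⟩
  exact hne (congrArg Prod.fst ((edgeNatEmbedding r).injective h)).symm

lemma iUnion_range_edgeEmbedding [Fintype E] [DecidableEq V] (r : E → V) {v : V}
    (hv : v ∈ Set.range r) :
    ⋃ e ∈ Finset.univ.filter (fun e => r e = v), Set.range (edgeEmbedding r e) =
      Set.range (Embedding.sectR v ℕ) := by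
  rw [range_sectR]
  ext x
  simp only [Finset.mem_filter, Finset.mem_univ, true_and, Set.mem_iUnion, Set.mem_preimage,
    Set.mem_singleton_iff, exists_prop]
  constructor
  · rintro ⟨e, rfl, n, rfl⟩
    exact edgeNatEmbedding_fst r (e, n)
  · rintro rfl
    obtain ⟨⟨e, n⟩, rfl⟩ := mem_range_edgeNatEmbedding r hv
    exact ⟨e, (edgeNatEmbedding_fst r (e, n)).symm, n, rfl⟩

variable [Fintype V] [Fintype E] [DecidableEq V]

noncomputable def lpCKFamily (s r : E → V) :
    CKFamily V E s r (lp (fun _ : V × ℕ => ℂ) 2 →L[ℂ] lp (fun _ : V × ℕ => ℂ) 2) where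
  p v := lpPartialIsometry (Embedding.sectR v ℕ) (Embedding.sectR v ℕ)
  se e := lpPartialIsometry (edgeEmbedding r e) (Embedding.sectR (s e) ℕ)
  proj_idem v := lpPartialIsometry_comp _ _ _
  proj_star v := by rw [star_eq_adjoint, adjoint_lpPartialIsometry]
  orth v w h := lpPartialIsometry_comp_of_disjoint <|
    pairwiseDisjoint_range_sectR Set.univ trivial trivial (Ne.symm h)
  ck1 e := by
    rw [star_eq_adjoint, adjoint_lpPartialIsometry]
    exact lpPartialIsometry_comp _ _ _
  ck2 v hv := by
    simp only [star_eq_adjoint, adjoint_lpPartialIsometry, mul_def, lpPartialIsometry_comp]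
    refine ContinuousLinearMap.ext fun ξ => lp.ext <| funext fun x => ?_
    rw [sum_lpPartialIsometry_self_apply _ _ (pairwiseDisjoint_range_edgeEmbedding r _),
      iUnion_range_edgeEmbedding r hv, lpPartialIsometry_self_apply]
  sum_p := by
    refine ContinuousLinearMap.ext fun ξ => lp.ext <| funext fun x => ?_
    rw [sum_lpPartialIsometry_self_apply _ _ (pairwiseDisjoint_range_sectR _)]
    simp [range_sectR]

lemma lpCKFamily_se_ne_zero (s r : E → V) (e : E) : (lpCKFamily s r).se e ≠ 0 :=
  lpPartialIsometry_ne_zero _ _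

end lpCKFamily

open scoped ComplexOrder

structure IsFaithfulTrace {A : Type*} [Ring A] [StarRing A] [Module ℂ A] (τ : A →ₗ[ℂ] ℂ) :
    Prop where
  nonneg : ∀ a, 0 ≤ τ (star a * a)
  comm : ∀ a b, τ (a * b) = τ (b * a)
  faithful : ∀ a, τ (star a * a) = 0 → a = 0

lemma Matrix.isFaithfulTrace_traceLinearMap (m : Type*) [Fintype m] [DecidableEq m] :
    IsFaithfulTrace (Matrix.traceLinearMap m ℂ ℂ) where
  nonneg a := (Matrix.posSemidef_conjTranspose_mul_self a).trace_nonneg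
  comm := Matrix.trace_mul_comm
  faithful _ := Matrix.trace_conjTranspose_mul_self_eq_zero_iff.1

namespace CKFamily

variable {V E : Type} [Fintype V] [Fintype E] [DecidableEq V] {s r : E → V}
  {A : Type*} [Ring A] [Algebra ℂ A] [StarRing A]

def map {B : Type*} [Ring B] [Algebra ℂ B] [StarRing B] (π : A →⋆ₐ[ℂ] B)
    (Q : CKFamily V E s r A) : CKFamily V E s r B where
  p v := π (Q.p v)
  se e := π (Q.se e)
  proj_idem v := by rw [← map_mul, Q.proj_idem]
  proj_star v := by rw [← map_star, Q.proj_star]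
  orth v w h := by rw [← map_mul, Q.orth v w h, map_zero]
  ck1 e := by rw [← map_star, ← map_mul, Q.ck1]
  ck2 v hv := by simp only [Q.ck2 v hv, map_sum, map_mul, map_star]
  sum_p := by rw [← map_sum, Q.sum_p, map_one]

variable (Q : CKFamily V E s r A) {τ : A →ₗ[ℂ] ℂ}

lemma trace_se_mul_star_nonneg (hτ : ∀ a, 0 ≤ τ (star a * a)) (e : E) :
    0 ≤ τ (Q.se e * star (Q.se e)) := by
  simpa using hτ (star (Q.se e))

lemma trace_p_source_eq (hτ : ∀ a b, τ (a * b) = τ (b * a)) (e : E) :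
    τ (Q.p (s e)) = τ (Q.se e * star (Q.se e)) := by
  rw [← Q.ck1, hτ]

lemma sum_trace_le_trace_p (hτ : ∀ a, 0 ≤ τ (star a * a)) {v : V} {S : Finset E}
    (hS : ∀ e ∈ S, r e = v) (hne : S.Nonempty) :
    ∑ e ∈ S, τ (Q.se e * star (Q.se e)) ≤ τ (Q.p v) := by
  obtain ⟨e₀, he₀⟩ := hne
  rw [Q.ck2 v ⟨e₀, hS e₀ he₀⟩, map_sum]
  exact Finset.sum_le_sum_of_subset_of_nonneg (fun e he => by simp [hS e he])
    fun e _ _ => Q.trace_se_mul_star_nonneg hτ e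

theorem se_eq_zero_of_cycle_entry (hτ : IsFaithfulTrace τ) {n : ℕ} {c : ZMod n → E}
    (hc : IsGraphCycle s r n c) {f : E} (hf : f ∉ Set.range c)
    (hrf : r f ∈ r '' Set.range c) : Q.se f = 0 := by
  classical
  have : NeZero n := ⟨hc.1.ne'⟩
  obtain ⟨-, ⟨i₀, rfl⟩, hri₀⟩ := hrf
  set w : E → ℂ := fun e => τ (Q.se e * star (Q.se e))
  have hcycle : ∑ i, τ (Q.p (r (c i))) = ∑ i, w (c i) := by
    simp only [← hc.2, Q.trace_p_source_eq hτ.comm]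
    exact Equiv.sum_comp (Equiv.addRight 1) fun i => w (c i)
  have hentry : ∑ i, w (c i) + w f ≤ ∑ i, τ (Q.p (r (c i))) := by
    rw [← Finset.add_sum_erase _ _ (Finset.mem_univ i₀),
      ← Finset.add_sum_erase _ _ (Finset.mem_univ i₀), add_right_comm]
    refine add_le_add ?_ (Finset.sum_le_sum fun i _ => ?_)
    · rw [← Finset.sum_pair fun h => hf ⟨i₀, h⟩]
      exact Q.sum_trace_le_trace_p hτ.nonneg (by simp [hri₀]) (Finset.insert_nonempty _ _)
    · simpa using Q.sum_trace_le_trace_p hτ.nonneg (S := {c i}) (by simp) (by simp)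
  have hwf : w f = 0 :=
    le_antisymm ((add_le_iff_nonpos_right _).1 (hcycle ▸ hentry))
      (Q.trace_se_mul_star_nonneg hτ.nonneg f)
  exact star_eq_zero.1 (hτ.faithful _ (by simpa [w] using hwf))

end CKFamily

theorem no_faithful_trace_of_cycle_with_entry_general
    (V E : Type) [Fintype V] [Fintype E] [DecidableEq V] (s r : E → V)
    (CG : Type) [NormedRing CG] [StarRing CG] [NormedAlgebra ℂ CG]
    (F : CKFamily V E s r CG) (hF : IsUniversalCKFamily V E s r CG F)
    {n : ℕ} (c : ZMod n → E) (hc : IsGraphCycle s r n c)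
    (f : E) (hf : f ∉ Set.range c) (hrf : r f ∈ r '' Set.range c) :
    (¬ ∃ τ : CG →ₗ[ℂ] ℂ,
        τ 1 = 1 ∧
        (∀ a : CG, 0 ≤ (τ (star a * a)).re ∧ (τ (star a * a)).im = 0) ∧
        (∀ a b : CG, τ (a * b) = τ (b * a)) ∧
        (∀ a : CG, τ (star a * a) = 0 → a = 0)) ∧
    ¬ (∀ d : CG, d ≠ 0 →
        ∃ (m : ℕ) (π : CG →⋆ₐ[ℂ] Matrix (Fin m) (Fin m) ℂ), π d ≠ 0) := by
  obtain ⟨φ, ⟨-, hφ⟩, -⟩ := hF _ (lpCKFamily s r)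
  have hne : F.se f ≠ 0 := fun h => lpCKFamily_se_ne_zero s r f (by rw [← hφ, h, map_zero])
  refine ⟨?_, fun hrfd => ?_⟩
  · rintro ⟨τ, -, hpos, htr, hfa⟩
    exact hne <| F.se_eq_zero_of_cycle_entry
      ⟨fun a => Complex.nonneg_iff.2 ⟨(hpos a).1, (hpos a).2.symm⟩, htr, hfa⟩ hc hf hrf
  · obtain ⟨m, π, hπ⟩ := hrfd _ hne
    exact hπ ((F.map π).se_eq_zero_of_cycle_entry
      (Matrix.isFaithfulTrace_traceLinearMap (Fin m)) hc hf hrf)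

/-- Let `G` be a finite directed graph containing a cycle `c` with an entry
(an edge `f` not on `c` whose range is a vertex of `c`).  Then the graph
C*-algebra `C*(G)` admits no faithful tracial state, and consequently `C*(G)`
is not residually finite-dimensional. -/
theorem no_faithful_trace_of_cycle_with_entry
    (V E : Type) [Fintype V] [Fintype E] [DecidableEq V] (s r : E → V)
    (CG : Type) [NormedRing CG] [StarRing CG] [CStarRing CG] [NormedAlgebra ℂ CG]
    [StarModule ℂ CG] [CompleteSpace CG]
    (F : CKFamily V E s r CG) (hF : IsUniversalCKFamily V E s r CG F)
    {n : ℕ} (c : ZMod n → E) (hc : IsGraphCycle s r n c)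
    (f : E) (hf : f ∉ Set.range c) (hrf : r f ∈ r '' Set.range c) :
    (¬ ∃ τ : CG →ₗ[ℂ] ℂ,
        τ 1 = 1 ∧
        (∀ a : CG, 0 ≤ (τ (star a * a)).re ∧ (τ (star a * a)).im = 0) ∧
        (∀ a b : CG, τ (a * b) = τ (b * a)) ∧
        (∀ a : CG, τ (star a * a) = 0 → a = 0)) ∧
    ¬ (∀ d : CG, d ≠ 0 →
        ∃ (m : ℕ) (π : CG →⋆ₐ[ℂ] Matrix (Fin m) (Fin m) ℂ), π d ≠ 0) :=
  no_faithful_trace_of_cycle_with_entry_general V E s r CG F hF c hc f hf hrf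
end
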